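/- arXiv:1311.0351 — 3 statements merged into one kernel-verified Lean document; each statement's English description precedes it below -/
import Mathlib

section
/- If X and Y are definable sets with respect to a covering C, then X ∩ Y is a definable set with respect to C. -/
variable {α : Type*}

/-- `C` is a covering of `U`: every member is nonempty and their union is `U`. -/
def IsCovering (U : Set α) (C : Set (Set α)) : Prop :=
  (∀ K ∈ C, K.Nonempty) ∧ ⋃₀ C = U

/-- The neighborhood of `x`: intersection of all members of `C` containing `x`. -/
def nbhd (C : Set (Set α)) (x : α) : Set α :=
  ⋂₀ {K | K ∈ C ∧ x ∈ K}

/-- `X` is definable w.r.t. `C` if it is the union of the neighborhoods of its points. -/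
def Definable (C : Set (Set α)) (X : Set α) : Prop :=
  X = ⋃ x ∈ X, nbhd C x

/-- The family of all definable subsets of `U` w.r.t. `C`. -/
def DefinableSets (U : Set α) (C : Set (Set α)) : Set (Set α) :=
  {X | X ⊆ U ∧ Definable C X}

/-- Covering-based lower approximation. -/
def lowerApprox (U : Set α) (C : Set (Set α)) (X : Set α) : Set α :=
  {x ∈ U | nbhd C x ⊆ X}

/-- Covering-based upper approximation. -/
def upperApprox (U : Set α) (C : Set (Set α)) (X : Set α) : Set α :=
  {x ∈ U | (nbhd C x ∩ X).Nonempty}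

/-- Rough matroid based on a covering `C` of `U`. -/
def RoughMatroid (U : Set α) (C : Set (Set α)) (I : Set (Set α)) : Prop :=
  I ⊆ DefinableSets U C ∧
  ∅ ∈ I ∧
  (∀ I₀ ∈ I, ∀ I', I' ⊆ I₀ → I' ∈ DefinableSets U C → I' ∈ I) ∧
  (∀ I₁ ∈ I, ∀ I₂ ∈ I, I₁.ncard < I₂.ncard →
    ∃ I₀ ∈ I, I₁ ⊂ I₀ ∧ I₀ ⊆ I₁ ∪ I₂)

/-- Matroid independence axioms (I1)-(I3). -/
def MatroidInd (I : Set (Set α)) : Prop :=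
  ∅ ∈ I ∧
  (∀ X ∈ I, ∀ Y, Y ⊆ X → Y ∈ I) ∧
  (∀ I₁ ∈ I, ∀ I₂ ∈ I, I₁.ncard < I₂.ncard →
    ∃ e ∈ I₂ \ I₁, insert e I₁ ∈ I)

lemma mem_nbhd_self (C : Set (Set α)) (x : α) : x ∈ nbhd C x :=
  fun _ hK => hK.2

lemma definable_iff_nbhd_subset {C : Set (Set α)} {X : Set α} :
    Definable C X ↔ ∀ x ∈ X, nbhd C x ⊆ X := by
  refine ⟨fun h x hx y hy => ?_, fun h => ?_⟩
  · rw [h]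
    exact Set.mem_biUnion hx hy
  · exact (Set.iUnion₂_subset h).antisymm' fun x hx => Set.mem_biUnion hx (mem_nbhd_self C x)

lemma Definable.inter {C : Set (Set α)} {X Y : Set α} (hX : Definable C X)
    (hY : Definable C Y) : Definable C (X ∩ Y) :=
  definable_iff_nbhd_subset.2 fun x hx =>
    Set.subset_inter (definable_iff_nbhd_subset.1 hX x hx.1)
      (definable_iff_nbhd_subset.1 hY x hx.2)

theorem definable_inter_general {U : Set α} {C : Set (Set α)} {X Y : Set α}
    (hX : X ∈ DefinableSets U C) (hY : Y ∈ DefinableSets U C) :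
    X ∩ Y ∈ DefinableSets U C :=
  ⟨Set.inter_subset_left.trans hX.1, hX.2.inter hY.2⟩

theorem definable_inter {U : Set α} {C : Set (Set α)} (hU : U.Finite)
    (hC : IsCovering U C) {X Y : Set α}
    (hX : X ∈ DefinableSets U C) (hY : Y ∈ DefinableSets U C) :
    X ∩ Y ∈ DefinableSets U C :=
  definable_inter_general hX hY
end

section
/- Let C be a covering of U, let D₁, D₂ be definable sets with respect to C, and let d ∈ D₂ − D₁. Then D₁ ∪ {d} is not a definable set with respect to C if and only if there exists e ∈ D₂ − D₁ with e ≠ d and e ∈ N_C(d). -/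
variable {α : Type*}

lemma Definable.nbhd_subset {C : Set (Set α)} {X : Set α} (h : Definable C X) {x : α}
    (hx : x ∈ X) : nbhd C x ⊆ X :=
  definable_iff_nbhd_subset.mp h x hx

lemma Definable.definable_insert_iff {C : Set (Set α)} {X : Set α} (h : Definable C X) (d : α) :
    Definable C (insert d X) ↔ nbhd C d ⊆ insert d X := by
  refine ⟨fun h' => h'.nbhd_subset (Set.mem_insert d X), fun hd => ?_⟩
  refine definable_iff_nbhd_subset.mpr fun x hx => ?_
  rcases hx with rfl | hx
  · exact hd
  · exact (h.nbhd_subset hx).trans (Set.subset_insert d X)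

theorem insert_not_definable_iff_general {U : Set α} {C : Set (Set α)} {D₁ D₂ : Set α}
    (hD₁ : D₁ ∈ DefinableSets U C) (hD₂ : D₂ ∈ DefinableSets U C)
    {d : α} (hd : d ∈ D₂ \ D₁) :
    insert d D₁ ∉ DefinableSets U C ↔
      ∃ e ∈ D₂ \ D₁, e ≠ d ∧ e ∈ nbhd C d := by
  have hsub : insert d D₁ ⊆ U := Set.insert_subset (hD₂.1 hd.1) hD₁.1
  have hnbhd : nbhd C d ⊆ D₂ := hD₂.2.nbhd_subset hd.1
  simp only [DefinableSets, Set.mem_ofPred_eq, hsub, true_and, hD₁.2.definable_insert_iff,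
    Set.not_subset, Set.mem_insert_iff, not_or]
  constructor
  · rintro ⟨e, he, hed, heD₁⟩
    exact ⟨e, ⟨hnbhd he, heD₁⟩, hed, he⟩
  · rintro ⟨e, ⟨-, heD₁⟩, hed, he⟩
    exact ⟨e, he, hed, heD₁⟩

theorem insert_not_definable_iff {U : Set α} {C : Set (Set α)} (hU : U.Finite)
    (hC : IsCovering U C) {D₁ D₂ : Set α}
    (hD₁ : D₁ ∈ DefinableSets U C) (hD₂ : D₂ ∈ DefinableSets U C)
    {d : α} (hd : d ∈ D₂ \ D₁) :
    insert d D₁ ∉ DefinableSets U C ↔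
      ∃ e ∈ D₂ \ D₁, e ≠ d ∧ e ∈ nbhd C d :=
  insert_not_definable_iff_general hD₁ hD₂ hd
end

section
/- Let M_C = (U, I_C) be a rough matroid based on a covering C. Then I_C satisfies the matroid independence axioms (I1)–(I3) if and only if N_C(x) = {x} for every x ∈ ⋃ I_C. -/
variable {α : Type*}

/- Once every point in `⋃₀ I` has the singleton neighbourhood, every subset of a member of `I` is
definable, so the restricted hereditary axiom (CI2) becomes (I2); and (I3) follows from (CI3) by
inserting one point of `I₀ \ I₁` into `I₁` and using (I2). Conversely, (I2) puts `{x}` into `I`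
for each `x ∈ ⋃₀ I`, and definability of `{x}` says exactly that `nbhd C x = {x}`. -/

theorem definable_of_forall_nbhd_eq_singleton {C : Set (Set α)} {Y : Set α}
    (h : ∀ y ∈ Y, nbhd C y = {y}) : Definable C Y :=
  calc Y = ⋃ y ∈ Y, {y} := (Set.biUnion_of_singleton Y).symm
    _ = ⋃ y ∈ Y, nbhd C y := Set.iUnion₂_congr fun y hy => (h y hy).symm

theorem nbhd_eq_singleton_of_definable {C : Set (Set α)} {x : α}
    (h : Definable C {x}) : nbhd C x = {x} :=
  (h.trans (Set.biUnion_singleton x (nbhd C))).symm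

namespace RoughMatroid

variable {U : Set α} {C : Set (Set α)} {I : Set (Set α)}

theorem subset_mem (hM : RoughMatroid U C I) (h : ∀ x ∈ ⋃₀ I, nbhd C x = {x})
    {X Y : Set α} (hX : X ∈ I) (hYX : Y ⊆ X) : Y ∈ I :=
  hM.2.2.1 X hX Y hYX ⟨hYX.trans (hM.1 hX).1,
    definable_of_forall_nbhd_eq_singleton fun y hy => h y ⟨X, hX, hYX hy⟩⟩

theorem exists_insert_mem (hM : RoughMatroid U C I) (h : ∀ x ∈ ⋃₀ I, nbhd C x = {x})
    {I₁ I₂ : Set α} (h₁ : I₁ ∈ I) (h₂ : I₂ ∈ I) (hlt : I₁.ncard < I₂.ncard) :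
    ∃ e ∈ I₂ \ I₁, insert e I₁ ∈ I := by
  obtain ⟨I₀, h₀, hI₁I₀, hI₀⟩ := hM.2.2.2 I₁ h₁ I₂ h₂ hlt
  obtain ⟨e, he₀, he₁⟩ := Set.exists_of_ssubset hI₁I₀
  exact ⟨e, ⟨(hI₀ he₀).resolve_left he₁, he₁⟩,
    hM.subset_mem h h₀ (Set.insert_subset he₀ hI₁I₀.subset)⟩

theorem nbhd_eq_singleton_of_matroidInd (hM : RoughMatroid U C I) (hI : MatroidInd I)
    {x : α} (hx : x ∈ ⋃₀ I) : nbhd C x = {x} := by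
  obtain ⟨X, hX, hxX⟩ := hx
  have hsingleton : {x} ∈ I := hI.2.1 X hX {x} (Set.singleton_subset_iff.2 hxX)
  exact nbhd_eq_singleton_of_definable (hM.1 hsingleton).2

end RoughMatroid

theorem roughMatroid_matroidInd_iff_general {U : Set α} {C : Set (Set α)} {I : Set (Set α)}
    (hM : RoughMatroid U C I) :
    MatroidInd I ↔ ∀ x ∈ ⋃₀ I, nbhd C x = {x} :=
  ⟨fun hI _ hx => hM.nbhd_eq_singleton_of_matroidInd hI hx, fun h =>
    ⟨hM.2.1, fun _ hX _ hYX => hM.subset_mem h hX hYX,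
      fun _ h₁ _ h₂ hlt => hM.exists_insert_mem h h₁ h₂ hlt⟩⟩

theorem roughMatroid_matroidInd_iff {U : Set α} {C : Set (Set α)} (hU : U.Finite)
    (hC : IsCovering U C) {I : Set (Set α)} (hM : RoughMatroid U C I) :
    MatroidInd I ↔ ∀ x ∈ ⋃₀ I, nbhd C x = {x} :=
  roughMatroid_matroidInd_iff_general hM
end
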